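/- Let p, p₁ ∈ ℝ³ and let ω ∈ ℝ³ be a unit vector with ω·(p₁/p₁₀ − p/p₀) ≥ 0. Define q = 2(p₀+p₁₀)p₀p₁₀·[ω·(p₁/p₁₀ − p/p₀)] / ((p₀+p₁₀)² − (ω·(p+p₁))²) (the denominator being positive since |ω·(p+p₁)| ≤ |p+p₁| < p₀+p₁₀). Then the post-collisional momenta p′ = p + qω and p₁′ = p₁ − qω conserve the total energy: √(1+|p+qω|²) + √(1+|p₁−qω|²) = p₀ + p₁₀. -/

import Mathlib

noncomputable section
open Real
open scoped RealInnerProductSpace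

/-- ℝ³ with the Euclidean norm. -/
abbrev E3 := EuclideanSpace ℝ (Fin 3)

namespace EnskogK

/-- the relativistic energy `p₀ = √(1+|p|²)` -/
def p0 (p : E3) : ℝ := Real.sqrt (1 + ‖p‖ ^ 2)

/-- the cross product on ℝ³ -/
def cross (u v : E3) : E3 :=
  (WithLp.equiv 2 (Fin 3 → ℝ)).symm
    (crossProduct ((WithLp.equiv 2 (Fin 3 → ℝ)) u) ((WithLp.equiv 2 (Fin 3 → ℝ)) v))

/-- the relative momentum `g = (1/2)√(|p₁−p|² − (p₁₀−p₀)²)` -/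
def gmom (p p₁ : E3) : ℝ :=
  (1 / 2) * Real.sqrt (‖p₁ - p‖ ^ 2 - (p0 p₁ - p0 p) ^ 2)

/-- `s = (p₀+p₁₀)² − |p+p₁|²` -/
def smom (p p₁ : E3) : ℝ := (p0 p + p0 p₁) ^ 2 - ‖p + p₁‖ ^ 2

end EnskogK

open EnskogK

namespace EnskogK

/-- `q(p,p₁,ω)` -/
def qfun (p p₁ ω : E3) : ℝ :=
  2 * (p0 p + p0 p₁) * p0 p * p0 p₁ * ⟪ω, (p0 p₁)⁻¹ • p₁ - (p0 p)⁻¹ • p⟫ /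
    ((p0 p + p0 p₁) ^ 2 - ⟪ω, p + p₁⟫ ^ 2)

end EnskogK

/-!
Write `E = p₀`, `F = p₁₀`, `a = ω·p`, `b = ω·p₁`. For a unit vector `ω` the new energies are
`√(E² + 2qa + q²)` and `√(F² − 2qb + q²)`, so everything reduces to real algebra: with
`δ = q(a+b)/(E+F)` one checks `E² + 2qa + q² = (E+δ)²` and
`E·(E+δ)·((E+F)² − (a+b)²) = (E² − a²)(E+F)² + (Eb − Fa)² ≥ 0`, so the first new energy is `E + δ`.
The exchange `(E, F, a, b) ↦ (F, E, −b, −a)` fixes `q` and turns `δ` into `−δ`, so the second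
new energy is `F − δ`, and the two add up to `E + F`.
-/

namespace EnskogK

section NormAlongUnit

variable {V : Type*} [NormedAddCommGroup V] [InnerProductSpace ℝ V] {ω : V}

theorem norm_add_smul_sq_of_norm_eq_one (hω : ‖ω‖ = 1) (p : V) (q : ℝ) :
    ‖p + q • ω‖ ^ 2 = ‖p‖ ^ 2 + 2 * q * ⟪ω, p⟫ + q ^ 2 := by
  rw [norm_add_sq_real, norm_smul, real_inner_smul_right, real_inner_comm, hω, mul_one,
    Real.norm_eq_abs, sq_abs]
  ring

theorem norm_sub_smul_sq_of_norm_eq_one (hω : ‖ω‖ = 1) (p : V) (q : ℝ) :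
    ‖p - q • ω‖ ^ 2 = ‖p‖ ^ 2 - 2 * q * ⟪ω, p⟫ + q ^ 2 := by
  rw [sub_eq_add_neg, ← neg_smul, norm_add_smul_sq_of_norm_eq_one hω]
  ring

theorem abs_inner_le_norm_of_norm_eq_one (hω : ‖ω‖ = 1) (p : V) : |⟪ω, p⟫| ≤ ‖p‖ := by
  simpa [hω] using abs_real_inner_le_norm ω p

end NormAlongUnit

theorem sq_p0 (p : E3) : p0 p ^ 2 = 1 + ‖p‖ ^ 2 :=
  Real.sq_sqrt (by positivity)

theorem norm_lt_p0 (p : E3) : ‖p‖ < p0 p :=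
  (Real.lt_sqrt (norm_nonneg p)).2 (lt_one_add _)

def collisionCoeff (E F a b : ℝ) : ℝ :=
  2 * (E + F) * (E * b - F * a) / ((E + F) ^ 2 - (a + b) ^ 2)

theorem qfun_eq_collisionCoeff (p p₁ ω : E3) :
    qfun p p₁ ω = collisionCoeff (p0 p) (p0 p₁) ⟪ω, p⟫ ⟪ω, p₁⟫ := by
  have hE : p0 p ≠ 0 := ((norm_nonneg p).trans_lt (norm_lt_p0 p)).ne'
  have hF : p0 p₁ ≠ 0 := ((norm_nonneg p₁).trans_lt (norm_lt_p0 p₁)).ne'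
  rw [qfun, collisionCoeff, inner_sub_right, real_inner_smul_right, real_inner_smul_right,
    inner_add_right]
  field_simp

theorem collisionCoeff_swap (E F a b : ℝ) :
    collisionCoeff F E (-b) (-a) = collisionCoeff E F a b := by
  unfold collisionCoeff
  ring

theorem collision_denom_pos {E F a b : ℝ} (ha : |a| < E) (hb : |b| < F) :
    0 < (E + F) ^ 2 - (a + b) ^ 2 := by
  have hab : |a + b| < E + F := (abs_add_le a b).trans_lt (add_lt_add ha hb)
  rw [sub_pos, ← sq_abs (a + b)]
  exact pow_lt_pow_left₀ hab (abs_nonneg _) two_ne_zero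

theorem sqrt_sq_add_collisionCoeff {E F a b : ℝ} (ha : |a| < E) (hb : |b| < F) :
    √(E ^ 2 + 2 * collisionCoeff E F a b * a + collisionCoeff E F a b ^ 2) =
      E + collisionCoeff E F a b * (a + b) / (E + F) := by
  have hE : 0 < E := (abs_nonneg a).trans_lt ha
  have hEF : 0 < E + F := by linarith [abs_nonneg a, abs_nonneg b]
  have hD := collision_denom_pos ha hb
  set δ := collisionCoeff E F a b * (a + b) / (E + F)
  have hsq :
      E ^ 2 + 2 * collisionCoeff E F a b * a + collisionCoeff E F a b ^ 2 = (E + δ) ^ 2 := by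
    simp only [δ, collisionCoeff]
    field_simp
    ring
  have hEa : 0 ≤ E ^ 2 - a ^ 2 := by
    rw [sub_nonneg, ← sq_abs a]
    exact pow_le_pow_left₀ (abs_nonneg a) ha.le 2
  have hprod : E * ((E + δ) * ((E + F) ^ 2 - (a + b) ^ 2)) =
      (E ^ 2 - a ^ 2) * (E + F) ^ 2 + (E * b - F * a) ^ 2 := by
    simp only [δ, collisionCoeff]
    field_simp
    ring
  have hnonneg : 0 ≤ E + δ := by
    have : 0 ≤ E * ((E + δ) * ((E + F) ^ 2 - (a + b) ^ 2)) := by rw [hprod]; positivity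
    exact (mul_nonneg_iff_of_pos_right hD).1 ((mul_nonneg_iff_of_pos_left hE).1 this)
  rw [hsq, Real.sqrt_sq hnonneg]

theorem sqrt_add_sqrt_collisionCoeff {E F a b : ℝ} (ha : |a| < E) (hb : |b| < F) :
    √(E ^ 2 + 2 * collisionCoeff E F a b * a + collisionCoeff E F a b ^ 2) +
      √(F ^ 2 - 2 * collisionCoeff E F a b * b + collisionCoeff E F a b ^ 2) = E + F := by
  have hswap := sqrt_sq_add_collisionCoeff (E := F) (F := E) (a := -b) (b := -a)
    (by rwa [abs_neg]) (by rwa [abs_neg])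
  rw [collisionCoeff_swap] at hswap
  rw [sqrt_sq_add_collisionCoeff ha hb, show F ^ 2 - 2 * collisionCoeff E F a b * b =
    F ^ 2 + 2 * collisionCoeff E F a b * -b by ring, hswap]
  field_simp
  ring

end EnskogK

theorem energy_conservation_general (p p₁ ω : E3) (hω : ‖ω‖ = 1) :
    Real.sqrt (1 + ‖p + qfun p p₁ ω • ω‖ ^ 2) +
      Real.sqrt (1 + ‖p₁ - qfun p p₁ ω • ω‖ ^ 2) = p0 p + p0 p₁ := by
  have ha : |⟪ω, p⟫| < p0 p := (abs_inner_le_norm_of_norm_eq_one hω p).trans_lt (norm_lt_p0 p)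
  have hb : |⟪ω, p₁⟫| < p0 p₁ :=
    (abs_inner_le_norm_of_norm_eq_one hω p₁).trans_lt (norm_lt_p0 p₁)
  have key := sqrt_add_sqrt_collisionCoeff ha hb
  rw [← qfun_eq_collisionCoeff, sq_p0, sq_p0] at key
  rw [norm_add_smul_sq_of_norm_eq_one hω, norm_sub_smul_sq_of_norm_eq_one hω]
  convert key using 3 <;> ring

/-- For a unit vector `ω` with `ω·(p₁/p₁₀ − p/p₀) ≥ 0`, the post-collisional momenta
`p′ = p + qω` and `p₁′ = p₁ − qω` conserve the total energy:
`√(1+|p+qω|²) + √(1+|p₁−qω|²) = p₀ + p₁₀`. -/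
theorem energy_conservation (p p₁ ω : E3) (hω : ‖ω‖ = 1)
    (hpos : 0 ≤ ⟪ω, (p0 p₁)⁻¹ • p₁ - (p0 p)⁻¹ • p⟫) :
    Real.sqrt (1 + ‖p + qfun p p₁ ω • ω‖ ^ 2) +
      Real.sqrt (1 + ‖p₁ - qfun p p₁ ω • ω‖ ^ 2) = p0 p + p0 p₁ :=
  energy_conservation_general p p₁ ω hω
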